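/- Let k ≥ 1 be an integer, z_j := exp(2πij/k) for j = 0, ..., k−1 the kth roots of unity, and let b_0, ..., b_{k−1} be nonzero real numbers. Then Q(z) := Σ_{j=0}^{k−1} b_j z^j satisfies Re(Q(z_j)) ≠ 0 for at least one j ∈ {0, 1, ..., k−1}. -/

import Mathlib

/-!
Averaging `Q` over all `k`-th roots of unity kills every monomial `z ^ i` with `0 < i < k`
(a geometric sum of a nontrivial root of unity), leaving `k * b₀`. Since `b₀ ≠ 0`, the real
parts `Re Q(z_j)` cannot all vanish.
-/

open Finset

theorem geom_sum_eq_zero_of_pow_eq_one {R : Type*} [CommRing R] [IsDomain R] {x : R} {k : ℕ}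
    (hx : x ^ k = 1) (hx1 : x ≠ 1) : ∑ j ∈ range k, x ^ j = 0 := by
  have h := geom_sum_mul x k
  rw [hx, sub_self] at h
  exact (mul_eq_zero.mp h).resolve_right (sub_ne_zero.mpr hx1)

namespace IsPrimitiveRoot

variable {R : Type*} [CommRing R] [IsDomain R] {ζ : R} {k : ℕ}

theorem sum_range_pow_pow (hζ : IsPrimitiveRoot ζ k) {i : ℕ} (hi : i < k) :
    ∑ j ∈ range k, (ζ ^ j) ^ i = if i = 0 then (k : R) else 0 := by
  split_ifs with hi0
  · simp [hi0]
  · simp_rw [← pow_mul, mul_comm _ i, pow_mul]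
    refine geom_sum_eq_zero_of_pow_eq_one ?_ (hζ.pow_ne_one_of_pos_of_lt hi0 hi)
    rw [← pow_mul, mul_comm, pow_mul, hζ.pow_eq_one, one_pow]

theorem sum_sum_mul_pow_pow (hζ : IsPrimitiveRoot ζ k) (hk : 0 < k) (c : Fin k → R) :
    ∑ j : Fin k, ∑ i : Fin k, c i * (ζ ^ (j : ℕ)) ^ (i : ℕ) = k * c ⟨0, hk⟩ := by
  have hcol (i : Fin k) :
      ∑ j : Fin k, (ζ ^ (j : ℕ)) ^ (i : ℕ) = if i = ⟨0, hk⟩ then (k : R) else 0 := by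
    rw [Fin.sum_univ_eq_sum_range (fun j => (ζ ^ j) ^ (i : ℕ)), hζ.sum_range_pow_pow i.is_lt]
    simp only [Fin.ext_iff]
  rw [sum_comm]
  simp_rw [← mul_sum, hcol, mul_ite, mul_zero, sum_ite_eq', mem_univ, if_true, mul_comm]

end IsPrimitiveRoot

theorem Complex.exp_two_pi_I_mul_div_eq_pow (j k : ℕ) :
    Complex.exp (2 * Real.pi * Complex.I * j / k) =
      Complex.exp (2 * Real.pi * Complex.I / k) ^ j := by
  rw [← Complex.exp_nat_mul]
  ring_nf

/-- If all coefficients `b_0, …, b_{k-1}` are nonzero reals, then `Re(Q(z_j)) ≠ 0` for some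
`k`-th root of unity `z_j = exp(2πij/k)`. -/
theorem exists_root_of_unity_re_ne_zero (k : ℕ) (hk : 1 ≤ k) (b : Fin k → ℝ)
    (hb : ∀ j, b j ≠ 0) :
    ∃ j : Fin k,
      (∑ i : Fin k, (b i : ℂ) *
        Complex.exp (2 * (Real.pi : ℂ) * Complex.I * ((j : ℕ) : ℂ) / (k : ℂ)) ^ (i : ℕ)).re ≠ 0 := by
  have hζ := Complex.isPrimitiveRoot_exp k (by omega)
  have hsum : ∑ j : Fin k, (∑ i : Fin k, (b i : ℂ) *
      Complex.exp (2 * (Real.pi : ℂ) * Complex.I * ((j : ℕ) : ℂ) / (k : ℂ)) ^ (i : ℕ)).re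
      = k * b ⟨0, hk⟩ := by
    simp_rw [Complex.exp_two_pi_I_mul_div_eq_pow, ← Complex.re_sum, hζ.sum_sum_mul_pow_pow hk]
    simp
  obtain ⟨j, -, hj⟩ := exists_ne_zero_of_sum_ne_zero <|
    hsum ▸ mul_ne_zero (Nat.cast_ne_zero.mpr (by omega)) (hb ⟨0, hk⟩)
  exact ⟨j, hj⟩
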